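/- Let n ≥ 0 and let Ψ be a set-valued sheaf on smooth n-manifolds with a topological enhancement over ℝⁿ. Topologize Ψ(M) for every smooth n-manifold M by the affine-patch construction: choose an open cover of M by affine patches with diffeomorphisms to open subsets of ℝⁿ, transport the given topologies to the patches, and give Ψ(M) the subspace topology of the product over the patches (this is independent of choices). Then for every open smooth embedding f : N → M of smooth n-manifolds, the restriction map f* : Ψ(M) → Ψ(N) is continuous; in particular, for every diffeomorphism f the map f* is a homeomorphism. (The unenriched content of Lemma 3.5 of the paper: Ψ becomes a presheaf of topological spaces on smooth n-manifolds.) -/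

import Mathlib

open scoped Manifold
open TopologicalSpace Set

noncomputable section

/-- A map `f : N → M` between smooth `n`-manifolds is an *open smooth embedding* if it is
injective and a smooth local diffeomorphism; equivalently, it is a topological open embedding
which is a diffeomorphism onto its open image. -/
def IsOpenSmoothEmbedding (n : ℕ)
    {N : Type} [TopologicalSpace N] [ChartedSpace (EuclideanSpace ℝ (Fin n)) N]
    {M : Type} [TopologicalSpace M] [ChartedSpace (EuclideanSpace ℝ (Fin n)) M]
    (f : N → M) : Prop :=
  Function.Injective f ∧ IsLocalDiffeomorph (𝓡 n) (𝓡 n) (⊤ : ℕ∞) f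

theorem IsOpenSmoothEmbedding.continuous {n : ℕ}
    {N : Type} [TopologicalSpace N] [ChartedSpace (EuclideanSpace ℝ (Fin n)) N]
    {M : Type} [TopologicalSpace M] [ChartedSpace (EuclideanSpace ℝ (Fin n)) M]
    {f : N → M} (hf : IsOpenSmoothEmbedding n f) : Continuous f :=
  hf.2.contMDiff.continuous

/-- A set-valued sheaf `Ψ` on the site of smooth `n`-manifolds (second countable, Hausdorff,
without boundary) and open smooth embeddings, presented in terms of its sections over the open
subsets of each smooth `n`-manifold.  `sect M U` is the set `Ψ(U)` of sections over the open
subset `U ⊆ M`; `res` is restriction to a smaller open subset, `pull` is pullback along an open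
smooth embedding of manifolds, and `pullD` is pullback along a (partial) diffeomorphism between
an open subset of one manifold and an open subset of another.  These operations are functorial
and satisfy the sheaf condition for arbitrary open covers. -/
structure SetSheaf (n : ℕ) : Type 1 where
  sect : ∀ (M : Type) [TopologicalSpace M] [ChartedSpace (EuclideanSpace ℝ (Fin n)) M]
      [IsManifold (𝓡 n) (⊤ : ℕ∞) M] [SecondCountableTopology M] [T2Space M],
      Opens M → Type
  res : ∀ (M : Type) [TopologicalSpace M] [ChartedSpace (EuclideanSpace ℝ (Fin n)) M]
      [IsManifold (𝓡 n) (⊤ : ℕ∞) M] [SecondCountableTopology M] [T2Space M]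
      {U V : Opens M}, V ≤ U → sect M U → sect M V
  res_id : ∀ (M : Type) [TopologicalSpace M] [ChartedSpace (EuclideanSpace ℝ (Fin n)) M]
      [IsManifold (𝓡 n) (⊤ : ℕ∞) M] [SecondCountableTopology M] [T2Space M]
      (U : Opens M) (s : sect M U), res M (le_refl U) s = s
  res_comp : ∀ (M : Type) [TopologicalSpace M] [ChartedSpace (EuclideanSpace ℝ (Fin n)) M]
      [IsManifold (𝓡 n) (⊤ : ℕ∞) M] [SecondCountableTopology M] [T2Space M]
      {U V W : Opens M} (hVU : V ≤ U) (hWV : W ≤ V) (s : sect M U),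
      res M hWV (res M hVU s) = res M (hWV.trans hVU) s
  pull : ∀ (N : Type) [TopologicalSpace N] [ChartedSpace (EuclideanSpace ℝ (Fin n)) N]
      [IsManifold (𝓡 n) (⊤ : ℕ∞) N] [SecondCountableTopology N] [T2Space N]
      (M : Type) [TopologicalSpace M] [ChartedSpace (EuclideanSpace ℝ (Fin n)) M]
      [IsManifold (𝓡 n) (⊤ : ℕ∞) M] [SecondCountableTopology M] [T2Space M]
      (f : N → M) (hf : IsOpenSmoothEmbedding n f) (U : Opens M),
      sect M U → sect N ⟨f ⁻¹' (U : Set M), U.isOpen.preimage hf.continuous⟩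
  pull_id : ∀ (M : Type) [TopologicalSpace M] [ChartedSpace (EuclideanSpace ℝ (Fin n)) M]
      [IsManifold (𝓡 n) (⊤ : ℕ∞) M] [SecondCountableTopology M] [T2Space M]
      (hid : IsOpenSmoothEmbedding n (id : M → M)) (U : Opens M) (s : sect M U),
      pull M M id hid U s = s
  pull_comp : ∀ (P : Type) [TopologicalSpace P] [ChartedSpace (EuclideanSpace ℝ (Fin n)) P]
      [IsManifold (𝓡 n) (⊤ : ℕ∞) P] [SecondCountableTopology P] [T2Space P]
      (N : Type) [TopologicalSpace N] [ChartedSpace (EuclideanSpace ℝ (Fin n)) N]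
      [IsManifold (𝓡 n) (⊤ : ℕ∞) N] [SecondCountableTopology N] [T2Space N]
      (M : Type) [TopologicalSpace M] [ChartedSpace (EuclideanSpace ℝ (Fin n)) M]
      [IsManifold (𝓡 n) (⊤ : ℕ∞) M] [SecondCountableTopology M] [T2Space M]
      (g : P → N) (f : N → M) (hg : IsOpenSmoothEmbedding n g)
      (hf : IsOpenSmoothEmbedding n f) (hfg : IsOpenSmoothEmbedding n (f ∘ g))
      (U : Opens M) (s : sect M U),
      pull P N g hg _ (pull N M f hf U s) = pull P M (f ∘ g) hfg U s
  pull_res : ∀ (N : Type) [TopologicalSpace N] [ChartedSpace (EuclideanSpace ℝ (Fin n)) N]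
      [IsManifold (𝓡 n) (⊤ : ℕ∞) N] [SecondCountableTopology N] [T2Space N]
      (M : Type) [TopologicalSpace M] [ChartedSpace (EuclideanSpace ℝ (Fin n)) M]
      [IsManifold (𝓡 n) (⊤ : ℕ∞) M] [SecondCountableTopology M] [T2Space M]
      (f : N → M) (hf : IsOpenSmoothEmbedding n f) {U V : Opens M} (h : V ≤ U)
      (s : sect M U),
      pull N M f hf V (res M h s)
        = res N (fun _ hx => h hx) (pull N M f hf U s)
  pullD : ∀ (N : Type) [TopologicalSpace N] [ChartedSpace (EuclideanSpace ℝ (Fin n)) N]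
      [IsManifold (𝓡 n) (⊤ : ℕ∞) N] [SecondCountableTopology N] [T2Space N]
      (M : Type) [TopologicalSpace M] [ChartedSpace (EuclideanSpace ℝ (Fin n)) M]
      [IsManifold (𝓡 n) (⊤ : ℕ∞) M] [SecondCountableTopology M] [T2Space M]
      (e : OpenPartialHomeomorph N M),
      ContMDiffOn (𝓡 n) (𝓡 n) (⊤ : ℕ∞) e e.source →
      ContMDiffOn (𝓡 n) (𝓡 n) (⊤ : ℕ∞) e.symm e.target →
      ∀ (V : Opens N) (U : Opens M), (V : Set N) ⊆ e.source → e '' (V : Set N) = (U : Set M) →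
      sect M U → sect N V
  pullD_refl : ∀ (M : Type) [TopologicalSpace M] [ChartedSpace (EuclideanSpace ℝ (Fin n)) M]
      [IsManifold (𝓡 n) (⊤ : ℕ∞) M] [SecondCountableTopology M] [T2Space M]
      (h₁ : ContMDiffOn (𝓡 n) (𝓡 n) (⊤ : ℕ∞) (OpenPartialHomeomorph.refl M) (OpenPartialHomeomorph.refl M).source)
      (h₂ : ContMDiffOn (𝓡 n) (𝓡 n) (⊤ : ℕ∞) (OpenPartialHomeomorph.refl M).symm (OpenPartialHomeomorph.refl M).target)
      (V : Opens M) (s : sect M V),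
      pullD M M (OpenPartialHomeomorph.refl M) h₁ h₂ V V (subset_univ _) (image_id _) s = s
  pullD_res : ∀ (N : Type) [TopologicalSpace N] [ChartedSpace (EuclideanSpace ℝ (Fin n)) N]
      [IsManifold (𝓡 n) (⊤ : ℕ∞) N] [SecondCountableTopology N] [T2Space N]
      (M : Type) [TopologicalSpace M] [ChartedSpace (EuclideanSpace ℝ (Fin n)) M]
      [IsManifold (𝓡 n) (⊤ : ℕ∞) M] [SecondCountableTopology M] [T2Space M]
      (e : OpenPartialHomeomorph N M)
      (h₁ : ContMDiffOn (𝓡 n) (𝓡 n) (⊤ : ℕ∞) e e.source)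
      (h₂ : ContMDiffOn (𝓡 n) (𝓡 n) (⊤ : ℕ∞) e.symm e.target)
      {V' V : Opens N} {U' U : Opens M} (hV : (V : Set N) ⊆ e.source)
      (hV' : (V' : Set N) ⊆ e.source)
      (hU : e '' (V : Set N) = (U : Set M)) (hU' : e '' (V' : Set N) = (U' : Set M))
      (hVV' : V' ≤ V) (hUU' : U' ≤ U) (s : sect M U),
      res N hVV' (pullD N M e h₁ h₂ V U hV hU s)
        = pullD N M e h₁ h₂ V' U' hV' hU' (res M hUU' s)
  pullD_trans : ∀ (P : Type) [TopologicalSpace P] [ChartedSpace (EuclideanSpace ℝ (Fin n)) P]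
      [IsManifold (𝓡 n) (⊤ : ℕ∞) P] [SecondCountableTopology P] [T2Space P]
      (N : Type) [TopologicalSpace N] [ChartedSpace (EuclideanSpace ℝ (Fin n)) N]
      [IsManifold (𝓡 n) (⊤ : ℕ∞) N] [SecondCountableTopology N] [T2Space N]
      (M : Type) [TopologicalSpace M] [ChartedSpace (EuclideanSpace ℝ (Fin n)) M]
      [IsManifold (𝓡 n) (⊤ : ℕ∞) M] [SecondCountableTopology M] [T2Space M]
      (e : OpenPartialHomeomorph P N) (f : OpenPartialHomeomorph N M)
      (he₁ : ContMDiffOn (𝓡 n) (𝓡 n) (⊤ : ℕ∞) e e.source)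
      (he₂ : ContMDiffOn (𝓡 n) (𝓡 n) (⊤ : ℕ∞) e.symm e.target)
      (hf₁ : ContMDiffOn (𝓡 n) (𝓡 n) (⊤ : ℕ∞) f f.source)
      (hf₂ : ContMDiffOn (𝓡 n) (𝓡 n) (⊤ : ℕ∞) f.symm f.target)
      (hef₁ : ContMDiffOn (𝓡 n) (𝓡 n) (⊤ : ℕ∞) (e.trans f) (e.trans f).source)
      (hef₂ : ContMDiffOn (𝓡 n) (𝓡 n) (⊤ : ℕ∞) (e.trans f).symm (e.trans f).target)
      (W : Opens P) (V : Opens N) (U : Opens M)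
      (hW : (W : Set P) ⊆ e.source) (hV : e '' (W : Set P) = (V : Set N))
      (hV' : (V : Set N) ⊆ f.source) (hU : f '' (V : Set N) = (U : Set M))
      (hW' : (W : Set P) ⊆ (e.trans f).source)
      (hU' : (e.trans f) '' (W : Set P) = (U : Set M))
      (s : sect M U),
      pullD P N e he₁ he₂ W V hW hV (pullD N M f hf₁ hf₂ V U hV' hU s)
        = pullD P M (e.trans f) hef₁ hef₂ W U hW' hU' s
  pull_pullD : ∀ (N : Type) [TopologicalSpace N] [ChartedSpace (EuclideanSpace ℝ (Fin n)) N]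
      [IsManifold (𝓡 n) (⊤ : ℕ∞) N] [SecondCountableTopology N] [T2Space N]
      (M : Type) [TopologicalSpace M] [ChartedSpace (EuclideanSpace ℝ (Fin n)) M]
      [IsManifold (𝓡 n) (⊤ : ℕ∞) M] [SecondCountableTopology M] [T2Space M]
      (f : N → M) (hf : IsOpenSmoothEmbedding n f) (e : OpenPartialHomeomorph N M)
      (h₁ : ContMDiffOn (𝓡 n) (𝓡 n) (⊤ : ℕ∞) e e.source)
      (h₂ : ContMDiffOn (𝓡 n) (𝓡 n) (⊤ : ℕ∞) e.symm e.target)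
      (hef : EqOn f e e.source)
      (V : Opens N) (U : Opens M) (hV : (V : Set N) ⊆ e.source)
      (hU : e '' (V : Set N) = (U : Set M)) (s : sect M U),
      pullD N M e h₁ h₂ V U hV hU s
        = res N (fun x hx => by
            show f x ∈ (U : Set M)
            rw [← hU]
            exact ⟨x, hx, (hef (hV hx)).symm⟩)
          (pull N M f hf U s)
  locality : ∀ (M : Type) [TopologicalSpace M] [ChartedSpace (EuclideanSpace ℝ (Fin n)) M]
      [IsManifold (𝓡 n) (⊤ : ℕ∞) M] [SecondCountableTopology M] [T2Space M]
      {ι : Type} (U : ι → Opens M) (s t : sect M (⨆ i, U i)),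
      (∀ i, res M (le_iSup U i) s = res M (le_iSup U i) t) → s = t
  gluing : ∀ (M : Type) [TopologicalSpace M] [ChartedSpace (EuclideanSpace ℝ (Fin n)) M]
      [IsManifold (𝓡 n) (⊤ : ℕ∞) M] [SecondCountableTopology M] [T2Space M]
      {ι : Type} (U : ι → Opens M) (s : ∀ i, sect M (U i)),
      (∀ i j, res M (inf_le_left : U i ⊓ U j ≤ U i) (s i)
        = res M (inf_le_right : U i ⊓ U j ≤ U j) (s j)) →
      ∃ σ : sect M (⨆ i, U i), ∀ i, res M (le_iSup U i) σ = s i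

/-- A topological enhancement of a set-valued sheaf on smooth `n`-manifolds over `ℝⁿ`:
a topology on the set of sections over every open subset of `ℝⁿ` such that (a) restriction to a
smaller open subset is continuous, (b) pullback along every diffeomorphism between open subsets
of `ℝⁿ` is a homeomorphism, and (c) for every open cover the canonical injection into the
product of the spaces of local sections is a topological embedding. -/
structure TopEnhancement (n : ℕ) (Ψ : SetSheaf n) : Type 1 where
  τ : ∀ U : Opens (EuclideanSpace ℝ (Fin n)),
      TopologicalSpace (Ψ.sect (EuclideanSpace ℝ (Fin n)) U)
  continuous_res : ∀ {U V : Opens (EuclideanSpace ℝ (Fin n))} (h : V ≤ U),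
      @Continuous _ _ (τ U) (τ V) (Ψ.res _ h)
  isHomeomorph_pullD :
    ∀ (e : OpenPartialHomeomorph (EuclideanSpace ℝ (Fin n)) (EuclideanSpace ℝ (Fin n)))
      (h₁ : ContMDiffOn (𝓡 n) (𝓡 n) (⊤ : ℕ∞) e e.source)
      (h₂ : ContMDiffOn (𝓡 n) (𝓡 n) (⊤ : ℕ∞) e.symm e.target)
      (V U : Opens (EuclideanSpace ℝ (Fin n)))
      (hV : (V : Set (EuclideanSpace ℝ (Fin n))) ⊆ e.source)
      (hU : e '' (V : Set (EuclideanSpace ℝ (Fin n))) = (U : Set (EuclideanSpace ℝ (Fin n)))),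
      @IsHomeomorph _ _ (τ U) (τ V) (Ψ.pullD _ _ e h₁ h₂ V U hV hU)
  isEmbedding_cover : ∀ {ι : Type} (U : ι → Opens (EuclideanSpace ℝ (Fin n))),
      @Topology.IsEmbedding _ _ (τ (⨆ i, U i)) (@Pi.topologicalSpace ι _ (fun i => τ (U i)))
        (fun s i => Ψ.res _ (le_iSup U i) s)
/-- The affine-patch topology on the set of sections of `Ψ` over an open subset `U` of a smooth
`n`-manifold `M`, relative to a family of smooth diffeomorphisms `e i` from open subsets of `M`
contained in `U` onto open subsets of `ℝⁿ` (the affine patches): each set of sections over a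
patch `(e i).source` is topologised by transporting the given topology on the sections over the
open subset `(e i).target ⊆ ℝⁿ` along the bijection given by pullback along `e i`, and the
sections over `U` get the initial (subspace) topology induced by the canonical injection into
the product of the sections over the patches. -/
def patchTop (n : ℕ) (Ψ : SetSheaf n) (T : TopEnhancement n Ψ)
    (M : Type) [TopologicalSpace M] [ChartedSpace (EuclideanSpace ℝ (Fin n)) M]
    [IsManifold (𝓡 n) (⊤ : ℕ∞) M] [SecondCountableTopology M] [T2Space M]
    (U : Opens M) {ι : Type} (e : ι → OpenPartialHomeomorph M (EuclideanSpace ℝ (Fin n)))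
    (hsm : ∀ i, ContMDiffOn (𝓡 n) (𝓡 n) (⊤ : ℕ∞) (e i) (e i).source)
    (hsm' : ∀ i, ContMDiffOn (𝓡 n) (𝓡 n) (⊤ : ℕ∞) (e i).symm (e i).target)
    (hsub : ∀ i, (e i).source ⊆ (U : Set M)) :
    TopologicalSpace (Ψ.sect M U) :=
  TopologicalSpace.induced
    (fun s i => Ψ.res M
      (show (⟨(e i).source, (e i).open_source⟩ : Opens M) ≤ U from hsub i) s)
    (@Pi.topologicalSpace ι _ (fun i =>
      TopologicalSpace.coinduced
        (Ψ.pullD M (EuclideanSpace ℝ (Fin n)) (e i) (hsm i) (hsm' i)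
          ⟨(e i).source, (e i).open_source⟩ ⟨(e i).target, (e i).open_target⟩
          subset_rfl (e i).image_source_eq_target)
        (T.τ ⟨(e i).target, (e i).open_target⟩)))

/-!
The patch topology on `Ψ(M)` is the initial topology for the readings `(e⁻¹)* (s|_{e.source})` of
a section `s` in the charts `e` of the chosen atlas. So `f*` is continuous as soon as, for each
chart `d` of `N`, the reading of `f* s` in `d` depends continuously on `s`. The target of `d` is
covered by the sources of the transition maps `ψ = d⁻¹ ≫ f ≫ e`, `e` running over the charts of
`M`, and on the source of `ψ` that reading is the pullback along `ψ`, a diffeomorphism between open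
subsets of `ℝⁿ`, of the reading of `s` in `e`. The enhancement makes each of these continuous, and
its embedding axiom for open covers glues them. A bijective `f` is a diffeomorphism, and `(f⁻¹)*`
is a continuous inverse of `f*`.
-/

local notation "𝔼" n => EuclideanSpace ℝ (Fin n)

open Topology

section Manifold

variable {n : ℕ}
variable {N : Type} [TopologicalSpace N] [ChartedSpace (𝔼 n) N]
variable {M : Type} [TopologicalSpace M] [ChartedSpace (𝔼 n) M]

theorem isOpenSmoothEmbedding_id [IsManifold (𝓡 n) (⊤ : ℕ∞) M] :
    IsOpenSmoothEmbedding n (id : M → M) :=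
  ⟨Function.injective_id, by
    simpa using (Diffeomorph.refl (𝓡 n) M (⊤ : ℕ∞)).isLocalDiffeomorph⟩

namespace IsOpenSmoothEmbedding

variable {f : N → M}

theorem isOpenEmbedding (hf : IsOpenSmoothEmbedding n f) : IsOpenEmbedding f :=
  hf.2.isLocalHomeomorph.isOpenEmbedding_of_injective hf.1

variable [Nonempty N]

def toOpenPartialHomeomorph (hf : IsOpenSmoothEmbedding n f) : OpenPartialHomeomorph N M :=
  hf.isOpenEmbedding.toOpenPartialHomeomorph f

@[simp]
theorem coe_toOpenPartialHomeomorph (hf : IsOpenSmoothEmbedding n f) :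
    ⇑hf.toOpenPartialHomeomorph = f :=
  hf.isOpenEmbedding.toOpenPartialHomeomorph_apply f

@[simp]
theorem toOpenPartialHomeomorph_source (hf : IsOpenSmoothEmbedding n f) :
    hf.toOpenPartialHomeomorph.source = univ :=
  hf.isOpenEmbedding.toOpenPartialHomeomorph_source f

theorem contMDiffOn_toOpenPartialHomeomorph (hf : IsOpenSmoothEmbedding n f) :
    ContMDiffOn (𝓡 n) (𝓡 n) (⊤ : ℕ∞) hf.toOpenPartialHomeomorph
      hf.toOpenPartialHomeomorph.source := by
  rw [coe_toOpenPartialHomeomorph]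
  exact hf.2.contMDiff.contMDiffOn

-- Near `f x` the inverse of `f` agrees with the inverse of a local diffeomorphism `Φ` at `x`.
theorem contMDiffOn_toOpenPartialHomeomorph_symm (hf : IsOpenSmoothEmbedding n f) :
    ContMDiffOn (𝓡 n) (𝓡 n) (⊤ : ℕ∞) hf.toOpenPartialHomeomorph.symm
      hf.toOpenPartialHomeomorph.target := by
  rintro _ ⟨x, -, rfl⟩
  obtain ⟨Φ, hxΦ, hfΦ⟩ := hf.2 x
  have hinv : EqOn hf.toOpenPartialHomeomorph.symm Φ.symm Φ.target := fun y hy => by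
    have hy' : f (Φ.symm y) = y := (hfΦ (Φ.map_target hy)).trans (Φ.right_inv hy)
    conv_lhs => rw [← hy']
    exact hf.isOpenEmbedding.toOpenPartialHomeomorph_left_inv f
  have hfx : f x ∈ Φ.target := hfΦ hxΦ ▸ Φ.map_source hxΦ
  exact ((Φ.symm.contMDiffOn.congr hinv).contMDiffAt
    (Φ.open_target.mem_nhds hfx)).contMDiffWithinAt

end IsOpenSmoothEmbedding

end Manifold

namespace OpenPartialHomeomorph

variable {𝕜 : Type*} [NontriviallyNormedField 𝕜] {k : WithTop ℕ∞}
  {E₁ E₂ E₃ H₁ H₂ H₃ : Type*}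
  [NormedAddCommGroup E₁] [NormedSpace 𝕜 E₁] [TopologicalSpace H₁] {I₁ : ModelWithCorners 𝕜 E₁ H₁}
  [NormedAddCommGroup E₂] [NormedSpace 𝕜 E₂] [TopologicalSpace H₂] {I₂ : ModelWithCorners 𝕜 E₂ H₂}
  [NormedAddCommGroup E₃] [NormedSpace 𝕜 E₃] [TopologicalSpace H₃] {I₃ : ModelWithCorners 𝕜 E₃ H₃}
  {X₁ X₂ X₃ : Type*} [TopologicalSpace X₁] [ChartedSpace H₁ X₁]
  [TopologicalSpace X₂] [ChartedSpace H₂ X₂] [TopologicalSpace X₃] [ChartedSpace H₃ X₃]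

theorem contMDiffOn_trans {e : OpenPartialHomeomorph X₁ X₂} {g : OpenPartialHomeomorph X₂ X₃}
    (he : ContMDiffOn I₁ I₂ k e e.source) (hg : ContMDiffOn I₂ I₃ k g g.source) :
    ContMDiffOn I₁ I₃ k (e.trans g) (e.trans g).source :=
  hg.comp (he.mono inter_subset_left) inter_subset_right

theorem contMDiffOn_trans_symm {e : OpenPartialHomeomorph X₁ X₂}
    {g : OpenPartialHomeomorph X₂ X₃} (he : ContMDiffOn I₂ I₁ k e.symm e.target)
    (hg : ContMDiffOn I₃ I₂ k g.symm g.target) :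
    ContMDiffOn I₃ I₁ k (e.trans g).symm (e.trans g).target :=
  contMDiffOn_trans (e := g.symm) (g := e.symm) hg he

end OpenPartialHomeomorph

namespace SetSheaf

variable {n : ℕ} (Ψ : SetSheaf n)
variable {P : Type} [TopologicalSpace P] [ChartedSpace (𝔼 n) P]
  [IsManifold (𝓡 n) (⊤ : ℕ∞) P] [SecondCountableTopology P] [T2Space P]
variable {N : Type} [TopologicalSpace N] [ChartedSpace (𝔼 n) N]
  [IsManifold (𝓡 n) (⊤ : ℕ∞) N] [SecondCountableTopology N] [T2Space N]
variable {M : Type} [TopologicalSpace M] [ChartedSpace (𝔼 n) M]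
  [IsManifold (𝓡 n) (⊤ : ℕ∞) M] [SecondCountableTopology M] [T2Space M]
variable {Q : Type} [TopologicalSpace Q] [ChartedSpace (𝔼 n) Q]
  [IsManifold (𝓡 n) (⊤ : ℕ∞) Q] [SecondCountableTopology Q] [T2Space Q]

-- Every open set of the empty manifold is the union of the empty family.
theorem subsingleton_sect_of_isEmpty [IsEmpty M] (U : Opens M) : Subsingleton (Ψ.sect M U) := by
  obtain rfl : U = ⨆ i : Empty, i.elim := Subsingleton.elim _ _
  exact ⟨fun s t => Ψ.locality M _ s t (fun i => i.elim)⟩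

def pullGlobal (f : N → M) (hf : IsOpenSmoothEmbedding n f) : Ψ.sect M ⊤ → Ψ.sect N ⊤ :=
  fun s => Ψ.res N (fun x _ => mem_univ (f x)) (Ψ.pull N M f hf ⊤ s)

theorem pullGlobal_of_eq_id {k : M → M} (hk : IsOpenSmoothEmbedding n k) (h : k = id)
    (s : Ψ.sect M ⊤) : Ψ.pullGlobal k hk s = s := by
  subst h
  rw [pullGlobal, Ψ.pull_id, Ψ.res_id]

theorem pullGlobal_pullGlobal {g : P → N} {f : N → M} (hg : IsOpenSmoothEmbedding n g)
    (hf : IsOpenSmoothEmbedding n f) (hfg : IsOpenSmoothEmbedding n (f ∘ g)) (s : Ψ.sect M ⊤) :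
    Ψ.pullGlobal g hg (Ψ.pullGlobal f hf s) = Ψ.pullGlobal (f ∘ g) hfg s := by
  simp only [pullGlobal, Ψ.pull_res, Ψ.res_comp]
  exact congrArg (Ψ.res P _) (Ψ.pull_comp P N M g f hg hf hfg ⊤ s)

theorem pullGlobal_pullGlobal_of_comp_eq_id {g : M → N} {f : N → M}
    (hg : IsOpenSmoothEmbedding n g) (hf : IsOpenSmoothEmbedding n f) (h : f ∘ g = id)
    (s : Ψ.sect M ⊤) : Ψ.pullGlobal g hg (Ψ.pullGlobal f hf s) = s := by
  rw [Ψ.pullGlobal_pullGlobal hg hf (h ▸ isOpenSmoothEmbedding_id)]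
  exact Ψ.pullGlobal_of_eq_id _ h s

theorem pullD_pullD_symm (e : OpenPartialHomeomorph N M)
    (h₁ : ContMDiffOn (𝓡 n) (𝓡 n) (⊤ : ℕ∞) e e.source)
    (h₂ : ContMDiffOn (𝓡 n) (𝓡 n) (⊤ : ℕ∞) e.symm e.target)
    {V : Opens N} {U : Opens M} (hV : (V : Set N) ⊆ e.source) (hU : e '' V = U)
    (hU' : (U : Set M) ⊆ e.symm.source) (hV' : e.symm '' U = V) (s : Ψ.sect N V) :
    Ψ.pullD N M e h₁ h₂ V U hV hU (Ψ.pullD M N e.symm h₂ h₁ U V hU' hV' s) = s := by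
  have hid : EqOn id (e.trans e.symm) (e.trans e.symm).source :=
    fun x hx => (e.left_inv hx.1).symm
  have hc₁ : ContMDiffOn (𝓡 n) (𝓡 n) (⊤ : ℕ∞) (e.trans e.symm) (e.trans e.symm).source :=
    contMDiffOn_id.congr fun x hx => (hid hx).symm
  have hc₂ : ContMDiffOn (𝓡 n) (𝓡 n) (⊤ : ℕ∞) (e.trans e.symm).symm (e.trans e.symm).target :=
    OpenPartialHomeomorph.contMDiffOn_trans_symm h₂ h₁
  have hVt : (V : Set N) ⊆ (e.trans e.symm).source := fun x hx => ⟨hV hx, e.map_source (hV hx)⟩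
  have hVV : (e.trans e.symm) '' V = V := by
    rw [OpenPartialHomeomorph.coe_trans, image_comp, hU, hV']
  rw [Ψ.pullD_trans N M N e e.symm h₁ h₂ h₂ h₁ hc₁ hc₂ V U V hV hU hU' hV' hVt hVV,
    Ψ.pull_pullD N N id isOpenSmoothEmbedding_id _ hc₁ hc₂ hid V V hVt hVV, Ψ.pull_id, Ψ.res_id]

theorem pullD_trans_pullD_symm (G : OpenPartialHomeomorph P N) (e : OpenPartialHomeomorph N M)
    (hG₁ : ContMDiffOn (𝓡 n) (𝓡 n) (⊤ : ℕ∞) G G.source)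
    (hG₂ : ContMDiffOn (𝓡 n) (𝓡 n) (⊤ : ℕ∞) G.symm G.target)
    (he₁ : ContMDiffOn (𝓡 n) (𝓡 n) (⊤ : ℕ∞) e e.source)
    (he₂ : ContMDiffOn (𝓡 n) (𝓡 n) (⊤ : ℕ∞) e.symm e.target)
    (hψ₁ : ContMDiffOn (𝓡 n) (𝓡 n) (⊤ : ℕ∞) (G.trans e) (G.trans e).source)
    (hψ₂ : ContMDiffOn (𝓡 n) (𝓡 n) (⊤ : ℕ∞) (G.trans e).symm (G.trans e).target)
    {W : Opens P} {V : Opens N} {U : Opens M}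
    (hWG : (W : Set P) ⊆ G.source) (hGW : G '' W = V)
    (hWψ : (W : Set P) ⊆ (G.trans e).source) (hψW : (G.trans e) '' W = U)
    (hU : (U : Set M) ⊆ e.symm.source) (hUV : e.symm '' U = V) (s : Ψ.sect N V) :
    Ψ.pullD P M (G.trans e) hψ₁ hψ₂ W U hWψ hψW (Ψ.pullD M N e.symm he₂ he₁ U V hU hUV s) =
      Ψ.pullD P N G hG₁ hG₂ W V hWG hGW s := by
  have hVe : (V : Set N) ⊆ e.source := hUV ▸ image_subset_iff.2 fun _ hx => e.map_target (hU hx)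
  have hVU : e '' V = U := hUV ▸ e.image_symm_image_of_subset_target hU
  rw [← Ψ.pullD_trans P N M G e hG₁ hG₂ he₁ he₂ hψ₁ hψ₂ W V U hWG hGW hVe hVU hWψ hψW,
    Ψ.pullD_pullD_symm]

def inChart (e : OpenPartialHomeomorph M Q)
    (h₁ : ContMDiffOn (𝓡 n) (𝓡 n) (⊤ : ℕ∞) e e.source)
    (h₂ : ContMDiffOn (𝓡 n) (𝓡 n) (⊤ : ℕ∞) e.symm e.target)
    {U : Opens M} (hU : ⟨e.source, e.open_source⟩ ≤ U) (s : Ψ.sect M U) :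
    Ψ.sect Q ⟨e.target, e.open_target⟩ :=
  Ψ.pullD Q M e.symm h₂ h₁ ⟨e.target, e.open_target⟩ ⟨e.source, e.open_source⟩ subset_rfl
    e.symm_image_target_eq_source (Ψ.res M hU s)

theorem res_inChart_pullGlobal_eq_pullD_trans {f : N → M} (hf : IsOpenSmoothEmbedding n f)
    (F : OpenPartialHomeomorph N M) (hF₁ : ContMDiffOn (𝓡 n) (𝓡 n) (⊤ : ℕ∞) F F.source)
    (hF₂ : ContMDiffOn (𝓡 n) (𝓡 n) (⊤ : ℕ∞) F.symm F.target) (hfF : EqOn f F F.source)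
    (d : OpenPartialHomeomorph N Q) (hd₁ : ContMDiffOn (𝓡 n) (𝓡 n) (⊤ : ℕ∞) d d.source)
    (hd₂ : ContMDiffOn (𝓡 n) (𝓡 n) (⊤ : ℕ∞) d.symm d.target)
    (hG₁ : ContMDiffOn (𝓡 n) (𝓡 n) (⊤ : ℕ∞) (d.symm.trans F) (d.symm.trans F).source)
    (hG₂ : ContMDiffOn (𝓡 n) (𝓡 n) (⊤ : ℕ∞) (d.symm.trans F).symm (d.symm.trans F).target)
    {W : Opens Q} (hW : (W : Set Q) ⊆ (d.symm.trans F).source) (s : Ψ.sect M ⊤) :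
    Ψ.res Q (fun _ hx => (hW hx).1 : W ≤ ⟨d.target, d.open_target⟩)
        (Ψ.inChart d hd₁ hd₂ le_top (Ψ.pullGlobal f hf s)) =
      Ψ.pullD Q M (d.symm.trans F) hG₁ hG₂ W
        ⟨d.symm.trans F '' W, (d.symm.trans F).isOpen_image_of_subset_source W.isOpen hW⟩
        hW rfl (Ψ.res M le_top s) := by
  have hWd : (W : Set Q) ⊆ d.symm.source := fun _ hx => (hW hx).1
  let S : Opens N := ⟨d.symm '' W, d.symm.isOpen_image_of_subset_source W.isOpen hWd⟩
  let V : Opens M :=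
    ⟨d.symm.trans F '' W, (d.symm.trans F).isOpen_image_of_subset_source W.isOpen hW⟩
  have hSF : (S : Set N) ⊆ F.source := image_subset_iff.2 fun _ hx => (hW hx).2
  have hFS : F '' S = V := (image_comp F d.symm W).symm
  have hSd : S ≤ ⟨d.source, d.open_source⟩ := image_subset_iff.2 fun _ hx => d.map_target (hWd hx)
  have hpull : Ψ.res N hSd (Ψ.res N le_top (Ψ.pullGlobal f hf s)) =
      Ψ.pullD N M F hF₁ hF₂ S V hSF hFS (Ψ.res M le_top s) := by
    rw [Ψ.pull_pullD N M f hf F hF₁ hF₂ hfF S V hSF hFS, Ψ.pull_res]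
    simp only [pullGlobal, Ψ.res_comp]
  rw [inChart, Ψ.pullD_res Q N d.symm hd₂ hd₁ subset_rfl hWd d.symm_image_target_eq_source rfl
      (fun _ hx => (hW hx).1) hSd,
    hpull, Ψ.pullD_trans Q N M d.symm F hd₂ hd₁ hF₁ hF₂ hG₁ hG₂ W S V hWd rfl hSF hFS hW rfl]

theorem res_inChart_pullGlobal_eq_pullD_inChart {f : N → M} (hf : IsOpenSmoothEmbedding n f)
    (F : OpenPartialHomeomorph N M) (hF₁ : ContMDiffOn (𝓡 n) (𝓡 n) (⊤ : ℕ∞) F F.source)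
    (hF₂ : ContMDiffOn (𝓡 n) (𝓡 n) (⊤ : ℕ∞) F.symm F.target) (hfF : EqOn f F F.source)
    (d : OpenPartialHomeomorph N Q) (hd₁ : ContMDiffOn (𝓡 n) (𝓡 n) (⊤ : ℕ∞) d d.source)
    (hd₂ : ContMDiffOn (𝓡 n) (𝓡 n) (⊤ : ℕ∞) d.symm d.target)
    (e : OpenPartialHomeomorph M Q) (he₁ : ContMDiffOn (𝓡 n) (𝓡 n) (⊤ : ℕ∞) e e.source)
    (he₂ : ContMDiffOn (𝓡 n) (𝓡 n) (⊤ : ℕ∞) e.symm e.target)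
    (hG₁ : ContMDiffOn (𝓡 n) (𝓡 n) (⊤ : ℕ∞) (d.symm.trans F) (d.symm.trans F).source)
    (hG₂ : ContMDiffOn (𝓡 n) (𝓡 n) (⊤ : ℕ∞) (d.symm.trans F).symm (d.symm.trans F).target)
    (hψ₁ : ContMDiffOn (𝓡 n) (𝓡 n) (⊤ : ℕ∞) ((d.symm.trans F).trans e)
      ((d.symm.trans F).trans e).source)
    (hψ₂ : ContMDiffOn (𝓡 n) (𝓡 n) (⊤ : ℕ∞) ((d.symm.trans F).trans e).symm
      ((d.symm.trans F).trans e).target)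
    (s : Ψ.sect M ⊤) :
    Ψ.res Q (fun _ hx => hx.1.1 :
        (⟨((d.symm.trans F).trans e).source, ((d.symm.trans F).trans e).open_source⟩ : Opens Q) ≤
          ⟨d.target, d.open_target⟩)
        (Ψ.inChart d hd₁ hd₂ le_top (Ψ.pullGlobal f hf s)) =
      Ψ.pullD Q Q ((d.symm.trans F).trans e) hψ₁ hψ₂
        ⟨((d.symm.trans F).trans e).source, ((d.symm.trans F).trans e).open_source⟩
        ⟨((d.symm.trans F).trans e).target, ((d.symm.trans F).trans e).open_target⟩
        subset_rfl ((d.symm.trans F).trans e).image_source_eq_target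
        (Ψ.res Q (fun _ hx => hx.1 :
            (⟨((d.symm.trans F).trans e).target, ((d.symm.trans F).trans e).open_target⟩ :
              Opens Q) ≤ ⟨e.target, e.open_target⟩)
          (Ψ.inChart e he₁ he₂ le_top s)) := by
  have hWG : (((d.symm.trans F).trans e).source : Set Q) ⊆ (d.symm.trans F).source :=
    fun _ hx => hx.1
  have hVe : d.symm.trans F '' ((d.symm.trans F).trans e).source ⊆ e.source := by
    rintro _ ⟨x, hx, rfl⟩
    exact hx.2
  have hUV : e.symm '' ((d.symm.trans F).trans e).target =
      d.symm.trans F '' ((d.symm.trans F).trans e).source := by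
    rw [← ((d.symm.trans F).trans e).image_source_eq_target, OpenPartialHomeomorph.coe_trans,
      image_comp]
    exact e.symm_image_image_of_subset_source hVe
  rw [Ψ.res_inChart_pullGlobal_eq_pullD_trans hf F hF₁ hF₂ hfF d hd₁ hd₂ hG₁ hG₂ hWG, inChart,
    Ψ.pullD_res Q M e.symm he₂ he₁
      (V' := ⟨_, ((d.symm.trans F).trans e).open_target⟩)
      (U' := ⟨_, (d.symm.trans F).isOpen_image_of_subset_source
        ((d.symm.trans F).trans e).open_source hWG⟩)
      subset_rfl (fun y hy => hy.1) e.symm_image_target_eq_source hUV (fun y hy => hy.1) hVe,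
    Ψ.res_comp M le_top hVe]
  exact (Ψ.pullD_trans_pullD_symm _ _ hG₁ hG₂ he₁ he₂ hψ₁ hψ₂ hWG rfl _ _ _ hUV _).symm

end SetSheaf

theorem TopEnhancement.continuous_of_le_iSup {n : ℕ} {Ψ : SetSheaf n} (T : TopEnhancement n Ψ)
    {X : Type} {tX : TopologicalSpace X} {ι : Type} {V : Opens (𝔼 n)} (W : ι → Opens (𝔼 n))
    (hW : ∀ i, W i ≤ V) (hV : V ≤ ⨆ i, W i) {g : X → Ψ.sect (𝔼 n) V}
    (hg : ∀ i, Continuous[tX, T.τ (W i)] fun x => Ψ.res _ (hW i) (g x)) :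
    Continuous[tX, T.τ V] g := by
  obtain rfl : V = ⨆ i, W i := le_antisymm hV (iSup_le hW)
  let _ := T.τ
  exact (T.isEmbedding_cover W).continuous_iff.mpr (continuous_pi hg)

theorem patchTop_eq_iInf_induced {n : ℕ} (Ψ : SetSheaf n) (T : TopEnhancement n Ψ)
    {M : Type} [TopologicalSpace M] [ChartedSpace (𝔼 n) M]
    [IsManifold (𝓡 n) (⊤ : ℕ∞) M] [SecondCountableTopology M] [T2Space M]
    (U : Opens M) {ι : Type} (e : ι → OpenPartialHomeomorph M (𝔼 n))
    (hsm : ∀ i, ContMDiffOn (𝓡 n) (𝓡 n) (⊤ : ℕ∞) (e i) (e i).source)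
    (hsm' : ∀ i, ContMDiffOn (𝓡 n) (𝓡 n) (⊤ : ℕ∞) (e i).symm (e i).target)
    (hsub : ∀ i, (e i).source ⊆ (U : Set M)) :
    patchTop n Ψ T M U e hsm hsm' hsub =
      ⨅ i, (T.τ ⟨(e i).target, (e i).open_target⟩).induced
        (Ψ.inChart (e i) (hsm i) (hsm' i) (hsub i)) := by
  rw [patchTop, induced_to_pi (T := _)]
  refine iInf_congr fun i => ?_
  -- `pullD (e i)` is a bijection with inverse `pullD (e i).symm`.
  let chartEquiv : Ψ.sect (𝔼 n) ⟨(e i).target, (e i).open_target⟩ ≃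
      Ψ.sect M ⟨(e i).source, (e i).open_source⟩ :=
    { toFun := Ψ.pullD M (𝔼 n) (e i) (hsm i) (hsm' i) _ _ subset_rfl (e i).image_source_eq_target
      invFun := Ψ.pullD (𝔼 n) M (e i).symm (hsm' i) (hsm i) _ _ subset_rfl
        (e i).symm_image_target_eq_source
      left_inv := Ψ.pullD_pullD_symm (e i).symm (hsm' i) (hsm i) _ _ _ _
      right_inv := Ψ.pullD_pullD_symm (e i) (hsm i) (hsm' i) _ _ _ _ }
  change induced _ (coinduced chartEquiv _) = _
  rw [← chartEquiv.induced_symm, induced_compose]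
  rfl

theorem continuous_inChart_patchTop {n : ℕ} (Ψ : SetSheaf n) (T : TopEnhancement n Ψ)
    {M : Type} [TopologicalSpace M] [ChartedSpace (𝔼 n) M]
    [IsManifold (𝓡 n) (⊤ : ℕ∞) M] [SecondCountableTopology M] [T2Space M]
    (U : Opens M) {ι : Type} (e : ι → OpenPartialHomeomorph M (𝔼 n))
    (hsm : ∀ i, ContMDiffOn (𝓡 n) (𝓡 n) (⊤ : ℕ∞) (e i) (e i).source)
    (hsm' : ∀ i, ContMDiffOn (𝓡 n) (𝓡 n) (⊤ : ℕ∞) (e i).symm (e i).target)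
    (hsub : ∀ i, (e i).source ⊆ (U : Set M)) (i : ι) :
    Continuous[patchTop n Ψ T M U e hsm hsm' hsub, T.τ ⟨(e i).target, (e i).open_target⟩]
      (Ψ.inChart (e i) (hsm i) (hsm' i) (hsub i)) := by
  rw [patchTop_eq_iInf_induced]
  exact continuous_iInf_dom continuous_induced_dom

section Continuity

variable {n : ℕ} (Ψ : SetSheaf n) (T : TopEnhancement n Ψ)
variable {N : Type} [TopologicalSpace N] [ChartedSpace (𝔼 n) N]
  [IsManifold (𝓡 n) (⊤ : ℕ∞) N] [SecondCountableTopology N] [T2Space N]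
variable {M : Type} [TopologicalSpace M] [ChartedSpace (𝔼 n) M]
  [IsManifold (𝓡 n) (⊤ : ℕ∞) M] [SecondCountableTopology M] [T2Space M]
variable {ι κ : Type} (e : ι → OpenPartialHomeomorph M (𝔼 n))
  (hsmₑ : ∀ i, ContMDiffOn (𝓡 n) (𝓡 n) (⊤ : ℕ∞) (e i) (e i).source)
  (hsmₑ' : ∀ i, ContMDiffOn (𝓡 n) (𝓡 n) (⊤ : ℕ∞) (e i).symm (e i).target)

theorem continuous_inChart_pullGlobal [Nonempty N] (hcovₑ : ⋃ i, (e i).source = univ)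
    {f : N → M} (hf : IsOpenSmoothEmbedding n f) (d : OpenPartialHomeomorph N (𝔼 n))
    (hd₁ : ContMDiffOn (𝓡 n) (𝓡 n) (⊤ : ℕ∞) d d.source)
    (hd₂ : ContMDiffOn (𝓡 n) (𝓡 n) (⊤ : ℕ∞) d.symm d.target) :
    Continuous[patchTop n Ψ T M ⊤ e hsmₑ hsmₑ' (fun _ => subset_univ _),
      T.τ ⟨d.target, d.open_target⟩]
      fun s => Ψ.inChart d hd₁ hd₂ le_top (Ψ.pullGlobal f hf s) := by
  let _ := T.τ
  let _ := patchTop n Ψ T M ⊤ e hsmₑ hsmₑ' (fun _ => subset_univ _)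
  let F := hf.toOpenPartialHomeomorph
  have hF₁ := hf.contMDiffOn_toOpenPartialHomeomorph
  have hF₂ := hf.contMDiffOn_toOpenPartialHomeomorph_symm
  have hfF : EqOn f F F.source := fun x _ => by simp [F]
  have hG₁ := OpenPartialHomeomorph.contMDiffOn_trans (e := d.symm) hd₂ hF₁
  have hG₂ := OpenPartialHomeomorph.contMDiffOn_trans_symm (e := d.symm) hd₁ hF₂
  refine T.continuous_of_le_iSup (fun i => ⟨_, ((d.symm.trans F).trans (e i)).open_source⟩)
    (fun i x hx => hx.1.1) (fun x hx => ?_) fun i => ?_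
  · obtain ⟨i, hi⟩ := mem_iUnion.1 (hcovₑ.symm ▸ mem_univ (F (d.symm x)))
    exact Opens.mem_iSup.2 ⟨i, ⟨hx, by simp [F]⟩, hi⟩
  · have hψ₁ := OpenPartialHomeomorph.contMDiffOn_trans hG₁ (hsmₑ i)
    have hψ₂ := OpenPartialHomeomorph.contMDiffOn_trans_symm hG₂ (hsmₑ' i)
    exact ((T.isHomeomorph_pullD _ hψ₁ hψ₂ _ _ _ _).continuous.comp ((T.continuous_res _).comp
      (continuous_inChart_patchTop Ψ T ⊤ e hsmₑ hsmₑ' _ i))).congr fun s =>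
      (Ψ.res_inChart_pullGlobal_eq_pullD_inChart hf F hF₁ hF₂ hfF d hd₁ hd₂ (e i) (hsmₑ i)
        (hsmₑ' i) hG₁ hG₂ hψ₁ hψ₂ s).symm

theorem continuous_pullGlobal (hcovₑ : ⋃ i, (e i).source = univ)
    (d : κ → OpenPartialHomeomorph N (𝔼 n))
    (hsm_d : ∀ j, ContMDiffOn (𝓡 n) (𝓡 n) (⊤ : ℕ∞) (d j) (d j).source)
    (hsm_d' : ∀ j, ContMDiffOn (𝓡 n) (𝓡 n) (⊤ : ℕ∞) (d j).symm (d j).target)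
    {f : N → M} (hf : IsOpenSmoothEmbedding n f) :
    Continuous[patchTop n Ψ T M ⊤ e hsmₑ hsmₑ' (fun _ => subset_univ _),
      patchTop n Ψ T N ⊤ d hsm_d hsm_d' (fun _ => subset_univ _)] (Ψ.pullGlobal f hf) := by
  rcases isEmpty_or_nonempty N with hN | hN
  · let _ := patchTop n Ψ T M ⊤ e hsmₑ hsmₑ' (fun _ => subset_univ _)
    let _ := patchTop n Ψ T N ⊤ d hsm_d hsm_d' (fun _ => subset_univ _)
    have := Ψ.subsingleton_sect_of_isEmpty (⊤ : Opens N)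
    exact continuous_of_const fun _ _ => Subsingleton.elim _ _
  rw [patchTop_eq_iInf_induced Ψ T ⊤ d]
  exact continuous_iInf_rng.2 fun j => continuous_induced_rng.2 <|
    continuous_inChart_pullGlobal Ψ T e hsmₑ hsmₑ' hcovₑ hf (d j) (hsm_d j) (hsm_d' j)

end Continuity

/-- **Lemma 3.5** (`Ψ` becomes a presheaf of topological spaces on smooth `n`-manifolds).
Topologise the set `Ψ(M)` of sections over each smooth `n`-manifold `M` by the affine-patch
construction (for arbitrary choices of covers by affine patches and of diffeomorphisms to open
subsets of `ℝⁿ`; by Lemma 3.4 the topology does not depend on these choices).  Then for every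
open smooth embedding `f : N → M` of smooth `n`-manifolds, the restriction map
`f* : Ψ(M) → Ψ(N)` is continuous; in particular, if `f` is a diffeomorphism (i.e. moreover
surjective) then `f*` is a homeomorphism. -/
theorem restriction_continuous_patchTop (n : ℕ) (Ψ : SetSheaf n) (T : TopEnhancement n Ψ)
    (M : Type) [TopologicalSpace M] [ChartedSpace (EuclideanSpace ℝ (Fin n)) M]
    [IsManifold (𝓡 n) (⊤ : ℕ∞) M] [SecondCountableTopology M] [T2Space M]
    (N : Type) [TopologicalSpace N] [ChartedSpace (EuclideanSpace ℝ (Fin n)) N]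
    [IsManifold (𝓡 n) (⊤ : ℕ∞) N] [SecondCountableTopology N] [T2Space N]
    {ι κ : Type}
    (e : ι → OpenPartialHomeomorph M (EuclideanSpace ℝ (Fin n)))
    (hsmₑ : ∀ i, ContMDiffOn (𝓡 n) (𝓡 n) (⊤ : ℕ∞) (e i) (e i).source)
    (hsmₑ' : ∀ i, ContMDiffOn (𝓡 n) (𝓡 n) (⊤ : ℕ∞) (e i).symm (e i).target)
    (hcovₑ : (⋃ i, (e i).source) = univ)
    (d : κ → OpenPartialHomeomorph N (EuclideanSpace ℝ (Fin n)))
    (hsm_d : ∀ j, ContMDiffOn (𝓡 n) (𝓡 n) (⊤ : ℕ∞) (d j) (d j).source)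
    (hsm_d' : ∀ j, ContMDiffOn (𝓡 n) (𝓡 n) (⊤ : ℕ∞) (d j).symm (d j).target)
    (hcov_d : (⋃ j, (d j).source) = univ)
    (f : N → M) (hf : IsOpenSmoothEmbedding n f) :
    @Continuous _ _
        (patchTop n Ψ T M ⊤ e hsmₑ hsmₑ' (fun _ => subset_univ _))
        (patchTop n Ψ T N ⊤ d hsm_d hsm_d' (fun _ => subset_univ _))
        (fun s => Ψ.res N (fun x _ => Set.mem_univ (f x))
          (Ψ.pull N M f hf ⊤ s)) ∧
      (Function.Surjective f →
        @IsHomeomorph _ _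
          (patchTop n Ψ T M ⊤ e hsmₑ hsmₑ' (fun _ => subset_univ _))
          (patchTop n Ψ T N ⊤ d hsm_d hsm_d' (fun _ => subset_univ _))
          (fun s => Ψ.res N (fun x _ => Set.mem_univ (f x))
            (Ψ.pull N M f hf ⊤ s))) := by
  refine ⟨continuous_pullGlobal Ψ T e hsmₑ hsmₑ' hcovₑ d hsm_d hsm_d' hf, fun hsurj => ?_⟩
  let _ := patchTop n Ψ T M ⊤ e hsmₑ hsmₑ' (fun _ => subset_univ _)
  let _ := patchTop n Ψ T N ⊤ d hsm_d hsm_d' (fun _ => subset_univ _)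
  let Φ := hf.2.diffeomorphOfBijective ⟨hf.1, hsurj⟩
  have hΦ : IsOpenSmoothEmbedding n Φ.symm := ⟨Φ.symm.injective, Φ.symm.isLocalDiffeomorph⟩
  exact isHomeomorph_iff_exists_inverse.2
    ⟨continuous_pullGlobal Ψ T e hsmₑ hsmₑ' hcovₑ d hsm_d hsm_d' hf, Ψ.pullGlobal Φ.symm hΦ,
      Ψ.pullGlobal_pullGlobal_of_comp_eq_id hΦ hf (funext Φ.apply_symm_apply),
      Ψ.pullGlobal_pullGlobal_of_comp_eq_id hf hΦ (funext Φ.symm_apply_apply),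
      continuous_pullGlobal Ψ T d hsm_d hsm_d' hcov_d e hsmₑ hsmₑ' hΦ⟩
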